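/- arXiv:1902.00815 — 2 statements merged into one kernel-verified Lean document; each statement's English description precedes it below -/
import Mathlib

section
/- There exists an injective order-preserving map from the Boolean lattice {0,1}^4 into the set of nonzero monotone Boolean functions of 3 variables (ordered pointwise). -/
def tbl7 : List (List Bool) :=
  [[false,false,false,false,false,false,false,true],
   [false,false,false,false,false,false,true,true],
   [false,false,false,false,false,true,false,true],
   [false,false,false,false,true,true,true,true],
   [false,false,false,false,false,true,true,true],
   [false,false,false,true,false,true,true,true],
   [false,false,false,true,true,true,true,true],
   [false,false,true,true,true,true,true,true],
   [false,false,false,true,false,false,false,true],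
   [false,false,false,true,false,false,true,true],
   [false,false,false,true,false,true,false,true],
   [false,true,false,true,true,true,true,true],
   [false,false,true,true,false,true,true,true],
   [false,true,true,true,false,true,true,true],
   [false,true,true,true,true,true,true,true],
   [true,true,true,true,true,true,true,true]]

def F7 (s : Fin 4 → Bool) (x : Fin 3 → Bool) : Bool :=
  (tbl7.getD ((cond (s 0) 8 0)+(cond (s 1) 4 0)+(cond (s 2) 2 0)+(cond (s 3) 1 0)) []).getD
    ((cond (x 0) 4 0)+(cond (x 1) 2 0)+(cond (x 2) 1 0)) false

lemma F7_mono : ∀ s : Fin 4 → Bool, ∀ a b : Fin 3 → Bool, (∀ i, a i ≤ b i) → F7 s a ≤ F7 s b := by decide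

lemma F7_ne : ∀ s : Fin 4 → Bool, F7 s ≠ fun _ => false := by decide

lemma F7_inj : ∀ s t : Fin 4 → Bool, F7 s = F7 t → s = t := by decide

lemma F7_mono2 : ∀ s t : Fin 4 → Bool, (∀ i, s i ≤ t i) → ∀ x, F7 s x ≤ F7 t x := by decide

/-- There is an injective order-preserving map from the Boolean lattice `{0,1}^4`
into the nonzero monotone Boolean functions of 3 variables, ordered pointwise. -/
theorem stmt7 :
    ∃ φ : (Fin 4 → Bool) →
        {f : (Fin 3 → Bool) → Bool // Monotone f ∧ f ≠ fun _ => false},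
      Function.Injective φ ∧ Monotone φ := by
  refine ⟨fun s => ⟨F7 s, fun a b h => F7_mono s a b (fun i => h i), F7_ne s⟩, ?_, ?_⟩
  · intro s t h
    exact F7_inj s t (congrArg Subtype.val h)
  · intro s t h
    exact Subtype.mk_le_mk.mpr (fun x => F7_mono2 s t (fun i => h i) x)
end

section
/- A Boolean function f : {0,1}^n → Bool that is both monotone (with respect to the componentwise order) and early is monotone with respect to the majorization order: if x ≤ y in the majorization order then f(x) ≤ f(y). -/
/-!
Induct on the number of positions where `x` has a one and `y` does not. At the least such
position `i`, the prefix inequality at `i` yields some `k < i` where `y` has a one and `x` does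
not. Moving the one of `x` from `i` to `k` does not decrease `f` (earliness), removes `i` from
the mismatch set, and keeps `x` majorized by `y`: below `i` we have `x ≤ y` pointwise by
minimality of `i`, so on `[k, i)` the prefix counts of `x` were strictly below those of `y`.
Without mismatches, `x ≤ y` pointwise and monotonicity concludes.
-/

open Finset Function

section

variable {α : Type*} [LinearOrder α]

def IsEarly (f : (α → Bool) → Bool) : Prop :=
  ∀ i j : α, i < j → ∀ y : α → Bool, y i = false → y j = false →
    f (update y j true) = true → f (update y i true) = true

def moveTrue (x : α → Bool) (i k : α) : α → Bool :=
  update (update x i false) k true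

variable {f : (α → Bool) → Bool} {x y : α → Bool} {i k : α}

theorem IsEarly.le_moveTrue (hf : IsEarly f) (hki : k < i) (hxi : x i = true)
    (hxk : x k = false) : f x ≤ f (moveTrue x i k) := by
  have hx : update (update x i false) i true = x := by
    rw [update_idem, ← hxi, update_eq_self]
  refine Bool.le_iff_imp.mpr fun hfx => hf k i hki _ ?_ (update_self ..) (by rwa [hx])
  rwa [update_of_ne hki.ne]

variable [Fintype α]

def prefixCount (x : α → Bool) (k : α) : ℕ :=
  ∑ i ∈ univ.filter (· ≤ k), (x i).toNat

def IsMajorizedBy (x y : α → Bool) : Prop :=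
  ∀ k, prefixCount x k ≤ prefixCount y k

theorem prefixCount_moveTrue (hki : k ≠ i) (hxi : x i = true) (hxk : x k = false) (m : α) :
    (prefixCount (moveTrue x i k) m : ℤ) =
      prefixCount x m - (if i ≤ m then 1 else 0) + (if k ≤ m then 1 else 0) := by
  have hpoint : ∀ j, ((moveTrue x i k j).toNat : ℤ) =
      (x j).toNat - (Pi.single i 1 : α → ℤ) j + (Pi.single k 1 : α → ℤ) j := by
    intro j
    by_cases hjk : j = k
    · subst hjk; simp [moveTrue, hxk, hki]
    by_cases hji : j = i
    · subst hji; simp [moveTrue, hxi, Ne.symm hki]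
    · simp [moveTrue, hjk, hji]
  simp only [prefixCount, Nat.cast_sum, hpoint, sum_add_distrib, sum_sub_distrib,
    sum_pi_single', mem_filter, mem_univ, true_and]

theorem prefixCount_lt_of_le_of_lt (hle : ∀ j ≤ k, x j ≤ y j) (hik : i ≤ k) (hxi : x i = false)
    (hyi : y i = true) : prefixCount x k < prefixCount y k := by
  refine sum_lt_sum (fun j hj => ?_) ⟨i, by simpa using hik, ?_⟩
  · exact Bool.toNat_le_toNat (hle j (by simpa using hj))
  · simp [hxi, hyi]

theorem exists_lt_of_prefixCount_le (h : prefixCount x i ≤ prefixCount y i) (hxi : x i = true)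
    (hyi : y i = false) : ∃ k < i, x k = false ∧ y k = true := by
  by_contra! hxy
  refine h.not_gt (prefixCount_lt_of_le_of_lt (fun j hj => ?_) le_rfl hyi hxi)
  rcases hj.lt_or_eq with hj | rfl
  · have := hxy j hj
    cases hx : x j <;> cases hy : y j <;> simp_all
  · simp [hxi, hyi]

theorem IsMajorizedBy.moveTrue (hxy : IsMajorizedBy x y) (hki : k < i) (hxi : x i = true)
    (hxk : x k = false) (hyk : y k = true) (hmin : ∀ j < i, x j ≤ y j) :
    IsMajorizedBy (moveTrue x i k) y := by
  intro m
  have hcount := prefixCount_moveTrue hki.ne hxi hxk m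
  have hmaj := hxy m
  split_ifs at hcount with him hkm hkm
  · omega
  · exact absurd (hki.le.trans him) hkm
  · have := prefixCount_lt_of_le_of_lt (fun j hj => hmin j (hj.trans_lt (not_le.mp him)))
      hkm hxk hyk
    omega
  · omega

theorem card_mismatch_moveTrue_lt (hki : k ≠ i) (hxi : x i = true) (hyi : y i = false)
    (hyk : y k = true) :
    #{j | moveTrue x i k j = true ∧ y j = false} < #{j | x j = true ∧ y j = false} := by
  have hsub : ({j | moveTrue x i k j = true ∧ y j = false} : Finset α) ⊆
      ({j | x j = true ∧ y j = false} : Finset α).erase i := by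
    intro j hj
    simp only [mem_filter, mem_erase, mem_univ, true_and] at hj ⊢
    by_cases hjk : j = k
    · simp [hjk, hyk] at hj
    by_cases hji : j = i
    · simp [moveTrue, hji, Ne.symm hki] at hj
    · simp_all [moveTrue]
  exact (card_le_card hsub).trans_lt (card_erase_lt_of_mem (by simp [hxi, hyi]))

theorem Monotone.apply_le_of_isMajorizedBy (hmono : Monotone f) (hearly : IsEarly f)
    (hxy : IsMajorizedBy x y) : f x ≤ f y := by
  induction hN : #{j | x j = true ∧ y j = false} using Nat.strong_induction_on generalizing x
    with | _ N ih =>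
  by_cases hbad : ∃ i, x i = true ∧ y i = false
  · obtain ⟨i, hi, hmin⟩ := ({j | x j = true ∧ y j = false} : Finset α).exists_min_image id
      (by simpa [Finset.Nonempty] using hbad)
    simp only [mem_filter, mem_univ, true_and, id] at hi hmin
    obtain ⟨k, hki, hxk, hyk⟩ := exists_lt_of_prefixCount_le (hxy i) hi.1 hi.2
    have hle : ∀ j < i, x j ≤ y j := fun j hj => Bool.le_iff_imp.mpr fun hxj =>
      by_contra fun hyj => (hmin j ⟨hxj, by simpa using hyj⟩).not_gt hj
    calc f x ≤ f (moveTrue x i k) := hearly.le_moveTrue hki hi.1 hxk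
      _ ≤ f y := ih _ (hN ▸ card_mismatch_moveTrue_lt hki.ne hi.1 hi.2 hyk)
          (hxy.moveTrue hki hi.1 hxk hyk hle) rfl
  · push Not at hbad
    exact hmono fun j => Bool.le_iff_imp.mpr fun hxj => by simpa using hbad j hxj

end

/-- A Boolean function that is monotone (componentwise) and early is monotone with
respect to the majorization order. -/
theorem stmt15 (n : ℕ) (f : (Fin n → Bool) → Bool)
    (hmono : Monotone f)
    (hearly : ∀ i j : Fin n, i < j → ∀ y : Fin n → Bool, y i = false → y j = false →
      f (Function.update y j true) = true → f (Function.update y i true) = true) :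
    ∀ x y : Fin n → Bool,
      (∀ k : Fin n, ∑ i ∈ Finset.univ.filter (fun i => i ≤ k), (x i).toNat ≤
        ∑ i ∈ Finset.univ.filter (fun i => i ≤ k), (y i).toNat) →
      f x ≤ f y :=
  fun _ _ hxy => hmono.apply_le_of_isMajorizedBy hearly hxy
end
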